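/- Let T(ε) be the period of the solution to R'' + R/ε² + R³/ε = 0 with R(0)=r₀, R'(0)=v₀/ε, given by T(ε) = 4ε∫₀¹ dR/√(1−R² + (b²ε/2)(1−R⁴)) with b = b(ε) as in equation (b_val). Then T(ε) = 2πε − (3π/4)(r₀²+v₀²)ε² + ((105π/128)(r₀²+v₀²)² − (3π/8)r₀⁴)ε³ + O(ε⁴) as ε → 0⁺. -/

import Mathlib

/-!
Put `c = b² ε / 2`. Since `1 - R² + c (1 - R⁴) = (1 - R²) (1 + c (1 + R²))`, the integrand is
`(1 - R²)^(-1/2) (1 + u)^(-1/2)` with `u = c (1 + R²) ≤ 2c`. Expanding `(1 + u)^(-1/2)` to second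
order and integrating against the weight `(1 - R²)^(-1/2)`, whose even moments are
`π/2, π/4, 3π/16`, gives `∫ = π/2 - 3πc/8 + 57πc²/128 + O(c³)`. On the other hand
`c = (√(1 + 2εs + ε² r₀⁴) - 1) / 2 = sε/2 + (r₀⁴ - s²) ε²/4 + O(ε³)` with `s = r₀² + v₀²`,
and substituting this into `4ε (π/2 - 3πc/8 + 57πc²/128)` gives the expansion of `T`.
-/

open Real Filter Asymptotics MeasureTheory Set intervalIntegral Topology

lemma abs_one_div_sqrt_one_add_sub_le {u : ℝ} (hu₀ : 0 ≤ u) (hu₁ : u ≤ 1) :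
    |1 / √(1 + u) - (1 - u / 2 + 3 * u ^ 2 / 8)| ≤ 5 / 16 * u ^ 3 := by
  have ht : 0 < √(1 + u) := sqrt_pos.2 (by linarith)
  have ht2 : √(1 + u) ^ 2 = 1 + u := sq_sqrt (by linarith)
  have hu4 : 0 ≤ u ^ 4 := by positivity
  have hupper : 1 / √(1 + u) ≤ 1 - u / 2 + 3 * u ^ 2 / 8 := by
    have hp : 0 < 1 - u / 2 + 3 * u ^ 2 / 8 := by nlinarith
    rw [div_le_iff₀ ht, ← pow_le_pow_iff_left₀ zero_le_one (by positivity) two_ne_zero,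
      mul_pow, ht2]
    nlinarith [mul_nonneg hu₀ hu4]
  have hlower : 1 - u / 2 + 3 * u ^ 2 / 8 - 5 / 16 * u ^ 3 ≤ 1 / √(1 + u) := by
    have hr : 0 < 1 - u / 2 + 3 * u ^ 2 / 8 - 5 / 16 * u ^ 3 := by nlinarith
    rw [le_div_iff₀ ht, ← pow_le_pow_iff_left₀ (by positivity) zero_le_one two_ne_zero,
      mul_pow, ht2]
    nlinarith [mul_nonneg hu₀ hu4, mul_nonneg (mul_nonneg hu₀ hu₀) hu4,
      mul_nonneg (mul_nonneg hu₀ hu₀) (mul_nonneg hu₀ hu4), mul_nonneg hu4 (sub_nonneg.2 hu₁)]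
  rw [abs_le]
  constructor <;> linarith

lemma abs_sqrt_one_add_sub_le {x : ℝ} (hx : 0 ≤ x) :
    |√(1 + x) - (1 + x / 2 - x ^ 2 / 8)| ≤ x ^ 3 / 16 := by
  have hx3 : 0 ≤ x ^ 3 := by positivity
  have hupper : √(1 + x) ≤ 1 + x / 2 - x ^ 2 / 8 + x ^ 3 / 16 := by
    rw [sqrt_le_iff]
    constructor
    · nlinarith [sq_nonneg (x - 2)]
    · nlinarith [mul_nonneg (pow_nonneg hx 4) (add_nonneg (sq_nonneg (x - 2)) zero_le_one)]
  have hlower : 1 + x / 2 - x ^ 2 / 8 ≤ √(1 + x) := by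
    rcases le_or_gt (1 + x / 2 - x ^ 2 / 8) 0 with hp | hp
    · exact hp.trans (sqrt_nonneg _)
    · have hx8 : x ≤ 8 := by nlinarith
      rw [le_sqrt' hp]
      nlinarith [mul_nonneg hx3 (sub_nonneg.2 hx8)]
  rw [abs_le]
  constructor <;> linarith

lemma intervalIntegrable_div_sqrt_one_sub_sq {g : ℝ → ℝ} (hg : ContinuousOn g (uIcc 0 1)) :
    IntervalIntegrable (fun x => g x / √(1 - x ^ 2)) volume 0 1 := by
  have hw : IntervalIntegrable (fun x : ℝ => 1 / √(1 - x ^ 2)) volume 0 1 := by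
    refine intervalIntegrable_deriv_of_nonneg continuous_arcsin.continuousOn
      (fun x hx => ?_) (fun x _ => by positivity)
    rw [min_eq_left zero_le_one, max_eq_right zero_le_one] at hx
    exact hasDerivAt_arcsin (by linarith [hx.1]) hx.2.ne
  simpa only [mul_one_div] using hw.continuousOn_mul hg

lemma integral_poly_div_sqrt_one_sub_sq (a₀ a₂ a₄ : ℝ) :
    ∫ x in (0 : ℝ)..1, (a₀ + a₂ * x ^ 2 + a₄ * x ^ 4) / √(1 - x ^ 2)
      = (a₀ + a₂ / 2 + 3 * a₄ / 8) * (π / 2) := by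
  set A := a₀ + a₂ / 2 + 3 * a₄ / 8
  set β := a₂ / 2 + 3 * a₄ / 8
  have hderiv : ∀ x ∈ Ioo (0 : ℝ) 1, HasDerivAt
      (fun x => A * arcsin x - √(1 - x ^ 2) * (β * x + a₄ / 4 * x ^ 3))
      ((a₀ + a₂ * x ^ 2 + a₄ * x ^ 4) / √(1 - x ^ 2)) x := by
    rintro x ⟨hx₀, hx₁⟩
    have hpos : 0 < 1 - x ^ 2 := by nlinarith
    have hsq : √(1 - x ^ 2) ^ 2 = 1 - x ^ 2 := sq_sqrt hpos.le
    have hne : √(1 - x ^ 2) ≠ 0 := (sqrt_pos.2 hpos).ne'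
    have h : HasDerivAt (fun x => A * arcsin x - √(1 - x ^ 2) * (β * x + a₄ / 4 * x ^ 3)) _ x :=
      ((hasDerivAt_arcsin (by linarith) hx₁.ne).const_mul A).sub
        ((((hasDerivAt_pow 2 x).const_sub 1).sqrt hpos.ne').mul
          (((hasDerivAt_id x).const_mul β).add ((hasDerivAt_pow 3 x).const_mul (a₄ / 4))))
    convert h using 1
    field_simp
    linear_combination (8 * β + 6 * a₄ * x ^ 2) * hsq
  rw [integral_eq_sub_of_hasDerivAt_of_le zero_le_one (by fun_prop) hderiv
    (intervalIntegrable_div_sqrt_one_sub_sq (by fun_prop))]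
  simp

noncomputable def quarterPeriodIntegral (c : ℝ) : ℝ :=
  ∫ R in (0 : ℝ)..1, 1 / √(1 - R ^ 2 + c * (1 - R ^ 4))

lemma abs_quarterPeriodIntegral_sub_le {c : ℝ} (hc₀ : 0 ≤ c) (hc₁ : c ≤ 1 / 2) :
    |quarterPeriodIntegral c - (π / 2 - 3 * π / 8 * c + 57 * π / 128 * c ^ 2)|
      ≤ 5 * π / 4 * c ^ 3 := by
  set g : ℝ → ℝ := fun R => 1 / √(1 + c * (1 + R ^ 2))
  set p : ℝ → ℝ := fun R =>
    (1 - c / 2 + 3 * c ^ 2 / 8) + (-c / 2 + 3 * c ^ 2 / 4) * R ^ 2 + 3 * c ^ 2 / 8 * R ^ 4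
  have hfactor : EqOn (fun R => 1 / √(1 - R ^ 2 + c * (1 - R ^ 4)))
      (fun R => g R / √(1 - R ^ 2)) (uIcc 0 1) := by
    intro R hR
    rw [uIcc_of_le zero_le_one] at hR
    have h : 0 ≤ 1 - R ^ 2 := by nlinarith [hR.1, hR.2]
    simp only [g]
    rw [show 1 - R ^ 2 + c * (1 - R ^ 4) = (1 - R ^ 2) * (1 + c * (1 + R ^ 2)) by ring,
      sqrt_mul h, div_div, mul_comm]
  have hg : IntervalIntegrable (fun R => g R / √(1 - R ^ 2)) volume 0 1 :=
    intervalIntegrable_div_sqrt_one_sub_sq <| Continuous.continuousOn <|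
      continuous_const.div (by fun_prop) fun R => (sqrt_pos.2 (by positivity)).ne'
  have hp : IntervalIntegrable (fun R => p R / √(1 - R ^ 2)) volume 0 1 :=
    intervalIntegrable_div_sqrt_one_sub_sq (by fun_prop)
  have hpoint : ∀ R ∈ Ioc (0 : ℝ) 1, ‖(g R - p R) / √(1 - R ^ 2)‖
      ≤ (5 / 2 * c ^ 3 + 0 * R ^ 2 + 0 * R ^ 4) / √(1 - R ^ 2) := by
    rintro R ⟨hR₀, hR₁⟩
    have hR2 : R ^ 2 ≤ 1 := by nlinarith
    have hgp : |g R - p R| ≤ 5 / 2 * c ^ 3 := by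
      calc |g R - p R| = |1 / √(1 + c * (1 + R ^ 2))
              - (1 - c * (1 + R ^ 2) / 2 + 3 * (c * (1 + R ^ 2)) ^ 2 / 8)| := by
            simp only [g, p]; ring_nf
        _ ≤ 5 / 16 * (c * (1 + R ^ 2)) ^ 3 :=
            abs_one_div_sqrt_one_add_sub_le (by positivity) (by nlinarith)
        _ ≤ 5 / 16 * (c * 2) ^ 3 := by gcongr; linarith
        _ = 5 / 2 * c ^ 3 := by ring
    rw [norm_div, norm_of_nonneg (sqrt_nonneg _), zero_mul, zero_mul, add_zero, add_zero]
    exact div_le_div_of_nonneg_right hgp (sqrt_nonneg _)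
  calc |quarterPeriodIntegral c - (π / 2 - 3 * π / 8 * c + 57 * π / 128 * c ^ 2)|
      = ‖∫ R in (0 : ℝ)..1, (g R - p R) / √(1 - R ^ 2)‖ := by
        simp only [sub_div]
        rw [quarterPeriodIntegral, integral_congr hfactor, integral_sub hg hp,
          integral_poly_div_sqrt_one_sub_sq, norm_eq_abs]
        ring_nf
    _ ≤ ∫ R in (0 : ℝ)..1, (5 / 2 * c ^ 3 + 0 * R ^ 2 + 0 * R ^ 4) / √(1 - R ^ 2) :=
        norm_integral_le_of_norm_le zero_le_one (ae_of_all _ hpoint)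
          (intervalIntegrable_div_sqrt_one_sub_sq (by fun_prop))
    _ = 5 * π / 4 * c ^ 3 := by rw [integral_poly_div_sqrt_one_sub_sq]; ring

lemma isBigO_pow_pow_nhdsGT_zero {m n : ℕ} (h : m ≤ n) :
    (fun ε : ℝ => ε ^ n) =O[𝓝[>] 0] fun ε => ε ^ m := by
  rcases h.eq_or_lt with rfl | h
  · exact isBigO_refl _ _
  · exact (isLittleO_pow_pow h).isBigO.mono nhdsWithin_le_nhds

lemma isBigO_sq_nhdsGT_zero : (fun ε : ℝ => ε ^ 2) =O[𝓝[>] 0] fun ε => ε := by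
  simpa only [pow_one] using isBigO_pow_pow_nhdsGT_zero (m := 1) one_le_two

lemma isBigO_four_mul_quarterPeriodIntegral_sub {c : ℝ → ℝ} {a d : ℝ}
    (hc₀ : ∀ᶠ ε in 𝓝[>] 0, 0 ≤ c ε)
    (hc : (fun ε => c ε - (a * ε + d * ε ^ 2)) =O[𝓝[>] 0] fun ε => ε ^ 3) :
    (fun ε => 4 * ε * quarterPeriodIntegral (c ε)
      - (2 * π * ε - 3 * π / 2 * a * ε ^ 2 + (57 * π / 32 * a ^ 2 - 3 * π / 2 * d) * ε ^ 3))
      =O[𝓝[>] 0] fun ε => ε ^ 4 := by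
  have hε : (fun ε : ℝ => ε) =O[𝓝[>] 0] fun ε => ε := isBigO_refl _ _
  have hdiff : (fun ε => c ε - a * ε) =O[𝓝[>] 0] fun ε => ε ^ 2 :=
    ((hc.trans (isBigO_pow_pow_nhdsGT_zero (by norm_num))).add
      ((isBigO_refl _ _).const_mul_left d)).congr_left fun ε => by ring
  have hsum : (fun ε => c ε + a * ε) =O[𝓝[>] 0] fun ε => ε :=
    ((hdiff.trans isBigO_sq_nhdsGT_zero).add (hε.const_mul_left (2 * a))).congr_left
      fun ε => by ring
  have hlin : c =O[𝓝[>] 0] fun ε => ε :=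
    (hsum.sub (hε.const_mul_left a)).congr_left fun ε => by ring
  have hsmall : ∀ᶠ ε in 𝓝[>] 0, c ε ≤ 1 / 2 :=
    (hlin.trans_tendsto (tendsto_nhdsWithin_of_tendsto_nhds tendsto_id)).eventually
      (ge_mem_nhds (by norm_num))
  have hJ : (fun ε => quarterPeriodIntegral (c ε)
      - (π / 2 - 3 * π / 8 * c ε + 57 * π / 128 * c ε ^ 2)) =O[𝓝[>] 0] fun ε => ε ^ 3 := by
    refine (IsBigO.of_bound (5 * π / 4) ?_).trans (hlin.pow 3)
    filter_upwards [hc₀, hsmall] with ε h₀ h₁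
    rw [norm_eq_abs, norm_of_nonneg (by positivity)]
    exact abs_quarterPeriodIntegral_sub_le h₀ h₁
  -- `4ε (π/2 - 3πc/8 + 57πc²/128)` minus the cubic is
  -- `-(3π/2) ε (c - aε - dε²) + (57π/32) ε (c - aε) (c + aε)`.
  have h₁ := ((hε.mul hJ).const_mul_left 4).congr_right fun ε => show ε * ε ^ 3 = ε ^ 4 by ring
  have h₂ := ((hε.mul hc).const_mul_left (3 * π / 2)).congr_right
    fun ε => show ε * ε ^ 3 = ε ^ 4 by ring
  have h₃ := (((hε.mul hdiff).mul hsum).const_mul_left (57 * π / 32)).congr_right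
    fun ε => show ε * ε ^ 2 * ε = ε ^ 4 by ring
  exact ((h₁.sub h₂).add h₃).congr_left fun ε => by ring

lemma isBigO_half_sqrt_sub_one_sub {s q : ℝ} (hs : 0 ≤ s) (hq : 0 ≤ q) :
    (fun ε => (√(1 + 2 * ε * s + ε ^ 2 * q) - 1) / 2 - (s / 2 * ε + (q - s ^ 2) / 4 * ε ^ 2))
      =O[𝓝[>] 0] fun ε => ε ^ 3 := by
  have hx : (fun ε : ℝ => 2 * ε * s + ε ^ 2 * q) =O[𝓝[>] 0] fun ε => ε :=
    (((isBigO_refl _ _).const_mul_left (2 * s)).add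
      (isBigO_sq_nhdsGT_zero.const_mul_left q)).congr_left fun ε => by ring
  have hsqrt : (fun ε => √(1 + (2 * ε * s + ε ^ 2 * q))
      - (1 + (2 * ε * s + ε ^ 2 * q) / 2 - (2 * ε * s + ε ^ 2 * q) ^ 2 / 8))
      =O[𝓝[>] 0] fun ε => ε ^ 3 := by
    refine (IsBigO.of_bound (1 / 16) ?_).trans (hx.pow 3)
    filter_upwards [self_mem_nhdsWithin] with ε (hε : 0 < ε)
    have hx₀ : 0 ≤ 2 * ε * s + ε ^ 2 * q := by positivity
    rw [norm_eq_abs, norm_of_nonneg (by positivity)]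
    linarith [abs_sqrt_one_add_sub_le hx₀]
  have hrest : (fun ε : ℝ => s * q / 4 * ε ^ 3 + q ^ 2 / 16 * ε ^ 4)
      =O[𝓝[>] 0] fun ε => ε ^ 3 :=
    ((isBigO_refl _ _).const_mul_left _).add
      ((isBigO_pow_pow_nhdsGT_zero (by norm_num)).const_mul_left _)
  exact ((hsqrt.const_mul_left (1 / 2)).sub hrest).congr_left fun ε => by ring_nf

theorem duffing_period_expansion (r₀ v₀ : ℝ) (b : ℝ → ℝ)
    (hb : ∀ ε : ℝ, b ε
      = Real.sqrt ((Real.sqrt (1 + 2 * ε * (r₀ ^ 2 + v₀ ^ 2) + ε ^ 2 * r₀ ^ 4) - 1) / ε))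
    (T : ℝ → ℝ)
    (hT : ∀ ε : ℝ, 0 < ε →
      T ε = 4 * ε * ∫ R in (0:ℝ)..1,
        1 / Real.sqrt (1 - R ^ 2 + ((b ε) ^ 2 * ε / 2) * (1 - R ^ 4))) :
    (fun ε : ℝ => T ε - (2 * π * ε - (3 * π / 4) * (r₀ ^ 2 + v₀ ^ 2) * ε ^ 2
        + ((105 * π / 128) * (r₀ ^ 2 + v₀ ^ 2) ^ 2 - (3 * π / 8) * r₀ ^ 4) * ε ^ 3))
      =O[nhdsWithin 0 (Set.Ioi 0)] fun ε : ℝ => ε ^ 4 := by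
  have hs : 0 ≤ r₀ ^ 2 + v₀ ^ 2 := by positivity
  set s := r₀ ^ 2 + v₀ ^ 2
  have hc : (fun ε => b ε ^ 2 * ε / 2 - (s / 2 * ε + (r₀ ^ 4 - s ^ 2) / 4 * ε ^ 2))
      =O[𝓝[>] 0] fun ε => ε ^ 3 := by
    refine (isBigO_half_sqrt_sub_one_sub (q := r₀ ^ 4) hs (by positivity)).congr' ?_ .rfl
    filter_upwards [self_mem_nhdsWithin] with ε (hε : 0 < ε)
    have h₁ : 1 ≤ √(1 + 2 * ε * s + ε ^ 2 * r₀ ^ 4) :=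
      one_le_sqrt.2 (by nlinarith [sq_nonneg (ε * r₀ ^ 2)])
    rw [hb, sq_sqrt (div_nonneg (by linarith) hε.le)]
    field_simp
  have hc₀ : ∀ᶠ ε in 𝓝[>] 0, 0 ≤ b ε ^ 2 * ε / 2 := by
    filter_upwards [self_mem_nhdsWithin] with ε (hε : 0 < ε)
    positivity
  refine (isBigO_four_mul_quarterPeriodIntegral_sub hc₀ hc).congr' ?_ .rfl
  filter_upwards [self_mem_nhdsWithin] with ε hε
  rw [hT ε hε, quarterPeriodIntegral]
  ring
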